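/- Assume the Setup. Then for every k ≥ 1 and every cube J ∈ B_{l_k}^d with J ⊆ X_k, one has μ(J) ≤ 2 C_0^d · l_k^{(dn−α)/(n−1) − η_k}, where η_k = (n+1)ε_k/(2(n−1)). -/

import Mathlib

/-! The cube `J` of scale `l_k` lies in a cube `I` of scale `l_{k-1}` meeting `X_{k-1}`, so
`μ(J) = μ(I)/N ≤ 1/N`, where `N ≥ (l_{k-1}/r_k)^d / 2` counts the cubes of `X_k` inside `I`.
Taking the square root of `l_k^{ε_k} ≤ l_{k-1}^{2d}` and using `r_k ≤ C_0 l_k^β` turns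
`2 (r_k/l_{k-1})^d` into `2 C_0^d l_k^{βd - ε_k/2}`, and `βd - ε_k/2` is the stated exponent. -/

open Filter Set

noncomputable section

/-- A dyadic length: a real number of the form `2 ^ (-k)` for a natural number `k`. -/
def IsDyadicLength (l : ℝ) : Prop := ∃ k : ℕ, l = (2 : ℝ) ^ (-(k : ℤ))

/-- The half-open dyadic cube of sidelength `l` with corner `l • m`. -/
def dyadicCube {ι : Type*} (l : ℝ) (m : ι → ℤ) : Set (ι → ℝ) :=
  {x | ∀ i, l * (m i : ℝ) ≤ x i ∧ x i < l * ((m i : ℝ) + 1)}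

/-- The (indices of the) cubes of `B_l` that intersect `E`. -/
def cubesMeeting {ι : Type*} (l : ℝ) (E : Set (ι → ℝ)) : Set (ι → ℤ) :=
  {m | (dyadicCube l m ∩ E).Nonempty}

/-- `#B_l(E)`, the number of cubes of sidelength `l` meeting `E`. -/
def cubeCount {ι : Type*} (l : ℝ) (E : Set (ι → ℝ)) : ℕ :=
  (cubesMeeting l E).ncard

/-- `E` is a union of cubes of `B_l`. -/
def IsCubeUnion {ι : Type*} (l : ℝ) (E : Set (ι → ℝ)) : Prop :=
  ∃ S : Set (ι → ℤ), E = ⋃ m ∈ S, dyadicCube l m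

/-- Lower Minkowski dimension, computed along dyadic scales. -/
def lowerMinkDim {ι : Type*} (Z : Set (ι → ℝ)) : ℝ :=
  Filter.atTop.liminf fun k : ℕ =>
    Real.log (cubeCount ((2 : ℝ) ^ (-(k : ℤ))) Z) / (k * Real.log 2)

/-- The unit cube `[0,1)^d`. -/
def unitCube (d : ℕ) : Set (Fin d → ℝ) := {x | ∀ i, x i ∈ Set.Ico (0 : ℝ) 1}

/-- `X^n`, viewed inside `ℝ^{dn} = (Fin n × Fin d → ℝ)`. -/
def nthPower {d n : ℕ} (X : Set (Fin d → ℝ)) : Set (Fin n × Fin d → ℝ) :=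
  {y | ∀ j, (fun i => y (j, i)) ∈ X}

/-- The point `(x_1, …, x_n) ∈ ℝ^{dn}` built from `x_1, …, x_n ∈ ℝ^d`. -/
def tuple {d n : ℕ} (x : Fin n → Fin d → ℝ) : Fin n × Fin d → ℝ := fun p => x p.1 p.2

/-- The `j`-th factor of a cube index in `B_l^{dn}`. -/
def cubeRow {d n : ℕ} (M : Fin n × Fin d → ℤ) (j : Fin n) : Fin d → ℤ := fun i => M (j, i)

/-- A cube of `B_l^{dn}` is strongly non-diagonal if its `n` factors are pairwise distinct. -/
def StronglyNonDiagonal {d n : ℕ} (M : Fin n × Fin d → ℤ) : Prop :=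
  Function.Injective (cubeRow M)

lemma IsDyadicLength.pos {l : ℝ} (h : IsDyadicLength l) : 0 < l := by
  obtain ⟨k, rfl⟩ := h
  positivity

lemma IsDyadicLength.exists_int_mul {l L : ℝ} (hl : IsDyadicLength l) (hL : IsDyadicLength L)
    (hlL : l ≤ L) : ∃ T : ℤ, 0 < T ∧ L = T * l := by
  obtain ⟨a, rfl⟩ := hl
  obtain ⟨b, rfl⟩ := hL
  have hba : b ≤ a := by
    have := (zpow_le_zpow_iff_right₀ (by norm_num : (1 : ℝ) < 2)).1 hlL
    omega
  refine ⟨2 ^ (a - b), by positivity, ?_⟩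
  push_cast
  rw [← zpow_natCast, ← zpow_add₀ two_ne_zero]
  congr 1
  omega

lemma dyadicCube_nonempty {ι : Type*} {l : ℝ} (hl : 0 < l) (m : ι → ℤ) :
    (dyadicCube l m).Nonempty :=
  ⟨fun i => l * m i, fun _ => ⟨le_rfl, by linarith⟩⟩

lemma dyadicCube_subset_dyadicCube_ediv {ι : Type*} {l : ℝ} {T : ℤ} (hl : 0 < l) (hT : 0 < T)
    (J : ι → ℤ) : dyadicCube l J ⊆ dyadicCube (T * l) (fun i => J i / T) := by
  intro x hx i
  obtain ⟨hlow, hhigh⟩ := hx i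
  have hq : ((J i / T : ℤ) : ℝ) * T ≤ J i := by exact_mod_cast Int.ediv_mul_le (J i) hT.ne'
  have hq' : (J i : ℝ) + 1 ≤ ((J i / T : ℤ) + 1) * T := by
    exact_mod_cast Int.lt_ediv_add_one_mul_self (J i) hT
  constructor <;> nlinarith

lemma IsDyadicLength.exists_dyadicCube_superset {ι : Type*} {l L : ℝ} (hl : IsDyadicLength l)
    (hL : IsDyadicLength L) (hlL : l ≤ L) (J : ι → ℤ) : ∃ I, dyadicCube l J ⊆ dyadicCube L I := by
  obtain ⟨T, hT, rfl⟩ := hl.exists_int_mul hL hlL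
  exact ⟨_, dyadicCube_subset_dyadicCube_ediv hl.pos hT J⟩

lemma MeasureTheory.measure_le_one_of_compl_eq_zero {α : Type*} [MeasurableSpace α]
    {μ : Measure α} {s : Set α} (h1 : μ s = 1) (h0 : μ sᶜ = 0) (t : Set α) : μ t ≤ 1 :=
  calc μ t ≤ μ univ := measure_mono (subset_univ t)
    _ = 1 := (measure_congr (ae_eq_univ.2 h0)).symm.trans h1

lemma ratio_pow_le_rpow {l L r C β ε : ℝ} {d : ℕ} (hl : 0 < l) (hL : 0 < L) (hr : 0 ≤ r)
    (hrC : r ≤ C * l ^ β) (hlL : l ^ ε ≤ L ^ (2 * (d : ℝ))) :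
    (r / L) ^ d ≤ C ^ d * l ^ (β * d - ε / 2) := by
  have hsqrt : l ^ (ε / 2) ≤ L ^ d := by
    rw [← pow_le_pow_iff_left₀ (by positivity) (by positivity) two_ne_zero,
      ← Real.rpow_mul_natCast hl.le, ← pow_mul, ← Real.rpow_natCast L]
    rwa [show ε / 2 * ((2 : ℕ) : ℝ) = ε by push_cast; ring, Nat.cast_mul, Nat.cast_two, mul_comm]
  calc (r / L) ^ d = r ^ d / L ^ d := div_pow r L d
    _ ≤ (C * l ^ β) ^ d / l ^ (ε / 2) :=
        div_le_div₀ (pow_nonneg (hr.trans hrC) d) (pow_le_pow_left₀ hr hrC d) (by positivity) hsqrt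
    _ = C ^ d * l ^ (β * d - ε / 2) := by
        rw [mul_pow, ← Real.rpow_mul_natCast hl.le, Real.rpow_sub hl, mul_div_assoc]

lemma one_le_mul_count_of_half_ratio_pow_le {N l L r C β ε : ℝ} {d : ℕ} (hl : 0 < l) (hL : 0 < L)
    (hr : 0 < r) (hN : 1 / 2 * (L / r) ^ d ≤ N) (hrC : r ≤ C * l ^ β)
    (hlL : l ^ ε ≤ L ^ (2 * (d : ℝ))) : 1 ≤ 2 * C ^ d * l ^ (β * d - ε / 2) * N := by
  have hN0 : 0 ≤ N := le_trans (by positivity) hN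
  calc (1 : ℝ) = 2 * (r / L) ^ d * (1 / 2 * (L / r) ^ d) := by
        rw [mul_mul_mul_comm, ← mul_pow, div_mul_div_comm, mul_comm r L, div_self (by positivity)]
        norm_num
    _ ≤ 2 * (r / L) ^ d * N := by gcongr
    _ ≤ 2 * (C ^ d * l ^ (β * d - ε / 2)) * N := by
        gcongr
        exact ratio_pow_le_rpow hl hL hr.le hrC hlL
    _ = 2 * C ^ d * l ^ (β * d - ε / 2) * N := by ring

theorem mass_at_scale_lk_general
    (d n : ℕ) (hd : 1 ≤ d) (hn : 2 ≤ n)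
    (α : ℝ)
    (ε : ℕ → ℝ)
    (C₀ : ℝ)
    (l : ℕ → ℝ) (hldyadic : ∀ k, IsDyadicLength (l k))
    (hlanti : StrictAnti l)
    (hlquad : ∀ k, 1 ≤ k → (l k) ^ (ε k) ≤ (l (k - 1)) ^ (2 * (d : ℝ)))
    (r : ℕ → ℝ) (hrdyadic : ∀ k, 1 ≤ k → IsDyadicLength (r k))
    (hrsize : ∀ k, 1 ≤ k →
      r k ≤ C₀ * (l k) ^ (((d : ℝ) * n - α - ε k) / ((d : ℝ) * ((n : ℝ) - 1))))
    (X : ℕ → Set (Fin d → ℝ)) (hX0 : X 0 = unitCube d)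
    (hXmono : ∀ k, X (k + 1) ⊆ X k)
    (hXlarge : ∀ k, 1 ≤ k → ∀ m ∈ cubesMeeting (l (k - 1)) (X (k - 1)),
      (1 / 2) * (l (k - 1) / r k) ^ d ≤
        (cubeCount (l k) (X k ∩ dyadicCube (l (k - 1)) m) : ℝ))
    (μ : MeasureTheory.Measure (Fin d → ℝ))
    (hμ1 : μ (unitCube d) = 1) (hμ2 : μ (unitCube d)ᶜ = 0)
    (hμrec : ∀ k, 1 ≤ k → ∀ J : Fin d → ℤ, dyadicCube (l k) J ⊆ unitCube d →
      ∀ I : Fin d → ℤ, dyadicCube (l k) J ⊆ dyadicCube (l (k - 1)) I →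
        (dyadicCube (l k) J ⊆ X k →
          μ (dyadicCube (l k) J) = μ (dyadicCube (l (k - 1)) I) /
            (cubeCount (l k) (X k ∩ dyadicCube (l (k - 1)) I) : ENNReal)) ∧
        (¬ dyadicCube (l k) J ⊆ X k → μ (dyadicCube (l k) J) = 0))
    :
    ∀ k, 1 ≤ k → ∀ J : Fin d → ℤ, dyadicCube (l k) J ⊆ X k →
      μ (dyadicCube (l k) J) ≤ ENNReal.ofReal (2 * C₀ ^ d *
        (l k) ^ (((d : ℝ) * n - α) / ((n : ℝ) - 1) -
          ((n : ℝ) + 1) * ε k / (2 * ((n : ℝ) - 1)))) := by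
  intro k hk J hJX
  have hXanti : Antitone X := antitone_nat_of_succ_le hXmono
  obtain ⟨I, hJI⟩ := (hldyadic k).exists_dyadicCube_superset (hldyadic (k - 1))
    (hlanti.antitone (Nat.sub_le k 1)) J
  have hJU : dyadicCube (l k) J ⊆ unitCube d := hX0 ▸ hJX.trans (hXanti (Nat.zero_le k))
  have hI : I ∈ cubesMeeting (l (k - 1)) (X (k - 1)) := by
    obtain ⟨x, hx⟩ := dyadicCube_nonempty (hldyadic k).pos J
    exact ⟨x, hJI hx, hXanti (Nat.sub_le k 1) (hJX hx)⟩
  have hexp : ((d : ℝ) * n - α - ε k) / ((d : ℝ) * ((n : ℝ) - 1)) * d - ε k / 2 =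
      ((d : ℝ) * n - α) / ((n : ℝ) - 1) - ((n : ℝ) + 1) * ε k / (2 * ((n : ℝ) - 1)) := by
    have hd0 : (d : ℝ) ≠ 0 := by positivity
    have hn1 : (n : ℝ) - 1 ≠ 0 := by
      have : (2 : ℝ) ≤ n := by exact_mod_cast hn
      linarith
    field_simp
    ring
  have hcount := one_le_mul_count_of_half_ratio_pow_le (hldyadic k).pos (hldyadic (k - 1)).pos
    (hrdyadic k hk).pos (hXlarge k hk I hI) (hrsize k hk) (hlquad k hk)
  rw [hexp] at hcount
  rw [(hμrec k hk J hJU I hJI).1 hJX]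
  calc _ ≤ 1 / (cubeCount (l k) (X k ∩ dyadicCube (l (k - 1)) I) : ENNReal) :=
        ENNReal.div_le_div_right (MeasureTheory.measure_le_one_of_compl_eq_zero hμ1 hμ2 _) _
    _ ≤ _ := by
        refine ENNReal.div_le_of_le_mul ?_
        rw [← ENNReal.ofReal_natCast, ← ENNReal.ofReal_mul' (Nat.cast_nonneg _)]
        exact ENNReal.one_le_ofReal.2 hcount

/-- **Lemma 4.1.** Mass bound at the scales `l_k`. -/
theorem mass_at_scale_lk
    (d n : ℕ) (hd : 1 ≤ d) (hn : 2 ≤ n)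
    (α : ℝ) (hαd : (d : ℝ) ≤ α) (hαdn : α < (d : ℝ) * n)
    (ε : ℕ → ℝ) (hεpos : ∀ k, 0 < ε k) (hεlim : Filter.Tendsto ε Filter.atTop (nhds 0))
    (C₀ : ℝ) (hC₀ : 0 < C₀)
    (l : ℕ → ℝ) (hldyadic : ∀ k, IsDyadicLength (l k)) (hl0 : l 0 = 1)
    (hlanti : StrictAnti l) (hllim : Filter.Tendsto l Filter.atTop (nhds 0))
    (hlquad : ∀ k, 1 ≤ k → (l k) ^ (ε k) ≤ (l (k - 1)) ^ (2 * (d : ℝ)))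
    (r : ℕ → ℝ) (hrdyadic : ∀ k, 1 ≤ k → IsDyadicLength (r k))
    (hrlow : ∀ k, 1 ≤ k → l k ≤ r k) (hrhigh : ∀ k, 1 ≤ k → r k ≤ l (k - 1))
    (hrsize : ∀ k, 1 ≤ k →
      r k ≤ C₀ * (l k) ^ (((d : ℝ) * n - α - ε k) / ((d : ℝ) * ((n : ℝ) - 1))))
    (X : ℕ → Set (Fin d → ℝ)) (hX0 : X 0 = unitCube d)
    (hXmono : ∀ k, X (k + 1) ⊆ X k)
    (hXcube : ∀ k, (X k).Nonempty ∧ IsCubeUnion (l k) (X k))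
    (hXlarge : ∀ k, 1 ≤ k → ∀ m ∈ cubesMeeting (l (k - 1)) (X (k - 1)),
      (1 / 2) * (l (k - 1) / r k) ^ d ≤
        (cubeCount (l k) (X k ∩ dyadicCube (l (k - 1)) m) : ℝ))
    (hXsep : ∀ k, 1 ≤ k → ∀ m' : Fin d → ℤ, ∀ m₁ ∈ cubesMeeting (l k) (X k),
      ∀ m₂ ∈ cubesMeeting (l k) (X k), dyadicCube (l k) m₁ ⊆ dyadicCube (r k) m' →
        dyadicCube (l k) m₂ ⊆ dyadicCube (r k) m' → m₁ = m₂)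
    (μ : MeasureTheory.Measure (Fin d → ℝ))
    (hμ1 : μ (unitCube d) = 1) (hμ2 : μ (unitCube d)ᶜ = 0)
    (hμrec : ∀ k, 1 ≤ k → ∀ J : Fin d → ℤ, dyadicCube (l k) J ⊆ unitCube d →
      ∀ I : Fin d → ℤ, dyadicCube (l k) J ⊆ dyadicCube (l (k - 1)) I →
        (dyadicCube (l k) J ⊆ X k →
          μ (dyadicCube (l k) J) = μ (dyadicCube (l (k - 1)) I) /
            (cubeCount (l k) (X k ∩ dyadicCube (l (k - 1)) I) : ENNReal)) ∧
        (¬ dyadicCube (l k) J ⊆ X k → μ (dyadicCube (l k) J) = 0))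
    :
    ∀ k, 1 ≤ k → ∀ J : Fin d → ℤ, dyadicCube (l k) J ⊆ X k →
      μ (dyadicCube (l k) J) ≤ ENNReal.ofReal (2 * C₀ ^ d *
        (l k) ^ (((d : ℝ) * n - α) / ((n : ℝ) - 1) -
          ((n : ℝ) + 1) * ε k / (2 * ((n : ℝ) - 1)))) :=
  mass_at_scale_lk_general d n hd hn α ε C₀ l hldyadic hlanti hlquad r hrdyadic hrsize X hX0 hXmono
    hXlarge μ hμ1 hμ2 hμrec

end
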